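/- Let X and Y be random variables on a probability space (Ω, 𝓕, P) with 0 < Var(X) < ∞ and 0 < Var(Y) < ∞, and suppose there exist a, b, c, d ∈ ℝ with E(Y|X) = aX + c a.s. and E(X|Y) = bY + d a.s. If ab = 1, then Y = aX + c almost surely. -/

import Mathlib

open MeasureTheory ProbabilityTheory

/-!
Conditioning on `X` preserves covariances with `X`, so `E(Y|X) = aX + c` gives
`Cov(X, Y) = a Var X` and, symmetrically, `Cov(X, Y) = b Var Y`. When `ab = 1` these give
`Var Y = a² Var X`, hence `Var(Y - aX) = Var Y - 2a Cov(X, Y) + a² Var X = 0`, so `Y - aX` is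
a.s. equal to its mean, which is `c`.
-/

namespace ProbabilityTheory

variable {Ω : Type*} {m m₀ : MeasurableSpace Ω} {μ : Measure Ω} {X Y Y' : Ω → ℝ}

lemma covariance_congr_right (h : Y =ᵐ[μ] Y') : cov[X, Y; μ] = cov[X, Y'; μ] := by
  unfold covariance
  rw [integral_congr_ae h]
  refine integral_congr_ae ?_
  filter_upwards [h] with ω hω
  rw [hω]

lemma integral_mul_condExp_of_stronglyMeasurable_left (hm : m ≤ m₀) [SigmaFinite (μ.trim hm)]
    (hXm : StronglyMeasurable[m] X) (hXY : Integrable (X * Y) μ) (hY : Integrable Y μ) :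
    μ[X * μ[Y | m]] = μ[X * Y] := by
  rw [← integral_condExp hm (f := X * Y)]
  exact integral_congr_ae (condExp_mul_of_stronglyMeasurable_left hXm hXY hY).symm

variable [IsProbabilityMeasure μ]

lemma covariance_condExp_right (hm : m ≤ m₀) (hXm : StronglyMeasurable[m] X)
    (hX : MemLp X 2 μ) (hY : MemLp Y 2 μ) :
    cov[X, μ[Y | m]; μ] = cov[X, Y; μ] := by
  rw [covariance_eq_sub hX (hY.condExp one_le_two), covariance_eq_sub hX hY,
    integral_condExp hm,
    integral_mul_condExp_of_stronglyMeasurable_left hm hXm (hX.integrable_mul hY)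
      (hY.integrable one_le_two)]

lemma covariance_eq_mul_variance_of_condExp_eq (hm : m ≤ m₀) (hXm : StronglyMeasurable[m] X)
    (hX : MemLp X 2 μ) (hY : MemLp Y 2 μ) {a c : ℝ}
    (h : μ[Y | m] =ᵐ[μ] fun ω ↦ a * X ω + c) :
    cov[X, Y; μ] = a * Var[X; μ] := by
  rw [← covariance_condExp_right hm hXm hX hY, covariance_congr_right h,
    covariance_add_const_right ((hX.integrable one_le_two).const_mul a),
    covariance_const_mul_right, covariance_self hX.aemeasurable]

lemma variance_sub_const_mul (hX : MemLp X 2 μ) (hY : MemLp Y 2 μ) (a : ℝ) :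
    Var[fun ω ↦ Y ω - a * X ω; μ] = Var[Y; μ] - 2 * a * cov[X, Y; μ] + a ^ 2 * Var[X; μ] := by
  rw [variance_fun_sub hY (hX.const_mul a), covariance_const_mul_right, covariance_comm,
    variance_const_mul]
  ring

lemma ae_eq_of_condExp_eq_of_variance_sub_eq_zero (hm : m ≤ m₀) (hX : MemLp X 2 μ)
    (hY : MemLp Y 2 μ) {a c : ℝ} (h : μ[Y | m] =ᵐ[μ] fun ω ↦ a * X ω + c)
    (hvar : Var[fun ω ↦ Y ω - a * X ω; μ] = 0) :
    Y =ᵐ[μ] fun ω ↦ a * X ω + c := by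
  have hXi := (hX.integrable one_le_two).const_mul a
  have hmean : μ[fun ω ↦ Y ω - a * X ω] = c := by
    rw [integral_sub (hY.integrable one_le_two) hXi, ← integral_condExp hm,
      integral_congr_ae h, integral_add hXi (integrable_const c)]
    simp
  filter_upwards [ae_eq_integral_of_variance_eq_zero (hY.sub (hX.const_mul a)) hvar] with ω hω
  simp only [Pi.sub_apply] at hω
  linarith

end ProbabilityTheory

theorem linearly_compatible_ab_eq_one_general
    {Ω : Type*} [MeasurableSpace Ω] (P : Measure Ω) [IsProbabilityMeasure P]
    (X Y : Ω → ℝ) (hX : Measurable X) (hY : Measurable Y)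
    (hX2 : MemLp X 2 P) (hY2 : MemLp Y 2 P)
    (a b c d : ℝ)
    (hYX : P[Y | MeasurableSpace.comap X inferInstance] =ᵐ[P] fun ω => a * X ω + c)
    (hXY : P[X | MeasurableSpace.comap Y inferInstance] =ᵐ[P] fun ω => b * Y ω + d)
    (hab : a * b = 1) :
    Y =ᵐ[P] fun ω => a * X ω + c := by
  have hcovX : cov[X, Y; P] = a * Var[X; P] :=
    covariance_eq_mul_variance_of_condExp_eq hX.comap_le
      (comap_measurable X).stronglyMeasurable hX2 hY2 hYX
  have hcovY : cov[Y, X; P] = b * Var[Y; P] :=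
    covariance_eq_mul_variance_of_condExp_eq hY.comap_le
      (comap_measurable Y).stronglyMeasurable hY2 hX2 hXY
  have hvar : Var[fun ω ↦ Y ω - a * X ω; P] = 0 := by
    rw [covariance_comm] at hcovY
    rw [variance_sub_const_mul hX2 hY2]
    linear_combination -a * hcovX - a * hcovY - Var[Y; P] * hab
  exact ae_eq_of_condExp_eq_of_variance_sub_eq_zero hX.comap_le hX2 hY2 hYX hvar

/-- **Lemma 2.2 (ii).** If `E(Y|X) = aX + c` and `E(X|Y) = bY + d` a.s., where `X, Y` have
finite positive variance, and `ab = 1`, then `Y = aX + c` almost surely. -/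
theorem linearly_compatible_ab_eq_one
    {Ω : Type*} [MeasurableSpace Ω] (P : Measure Ω) [IsProbabilityMeasure P]
    (X Y : Ω → ℝ) (hX : Measurable X) (hY : Measurable Y)
    (hX2 : MemLp X 2 P) (hY2 : MemLp Y 2 P)
    (hVarX : 0 < variance X P) (hVarY : 0 < variance Y P)
    (a b c d : ℝ)
    (hYX : P[Y | MeasurableSpace.comap X inferInstance] =ᵐ[P] fun ω => a * X ω + c)
    (hXY : P[X | MeasurableSpace.comap Y inferInstance] =ᵐ[P] fun ω => b * Y ω + d)
    (hab : a * b = 1) :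
    Y =ᵐ[P] fun ω => a * X ω + c :=
  linearly_compatible_ab_eq_one_general P X Y hX hY hX2 hY2 a b c d hYX hXY hab
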